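/- arXiv:2003.13199 — 2 statements merged into one kernel-verified Lean document; each statement's English description precedes it below -/
import Mathlib

section
/- Let (X, F, μ) be a measure space, n ≥ 1, and let t : X → ℝ^n and k : X → ℝ be measurable. For θ ∈ ℝ^n set Z(θ) := ∫ exp(⟨θ, t(x)⟩ + k(x)) dμ(x), F(θ) := log Z(θ), p_θ(x) := exp(⟨θ, t(x)⟩ - F(θ) + k(x)), and E_θ := ∫ p_θ(x)·exp(k(x)) dμ(x). Suppose θ₁, θ₂ ∈ ℝ^n are such that Z(θ₁), Z(θ₂), Z(2θ₁), Z(2θ₂), Z(θ₁+θ₂) all lie in (0,∞), and that E_{2θ₁} > 0, E_{2θ₂} > 0, E_{θ₁+θ₂} > 0. Then the Cauchy–Schwarz divergence satisfies D_CS(p_{θ₁}, p_{θ₂}) = J_F(2θ₁, 2θ₂) + log(√(E_{2θ₁}·E_{2θ₂}) / E_{θ₁+θ₂}), where J_F(θ, θ') := (F(θ)+F(θ'))/2 - F((θ+θ')/2). -/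
open MeasureTheory
open scoped ENNReal

/-- Partition function of an exponential family with sufficient statistic `t` and
carrier term `k`. -/
noncomputable def expFamZ {X : Type*} [MeasurableSpace X] (μ : Measure X) {n : ℕ}
    (t : X → Fin n → ℝ) (k : X → ℝ) (θ : Fin n → ℝ) : ℝ≥0∞ :=
  ∫⁻ x, ENNReal.ofReal (Real.exp ((∑ i, θ i * t x i) + k x)) ∂μ

/-- Cumulant function (log-normalizer) of the exponential family. -/
noncomputable def expFamF {X : Type*} [MeasurableSpace X] (μ : Measure X) {n : ℕ}
    (t : X → Fin n → ℝ) (k : X → ℝ) (θ : Fin n → ℝ) : ℝ :=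
  Real.log (expFamZ μ t k θ).toReal

/-- Density of the exponential family. -/
noncomputable def expFamPdf {X : Type*} [MeasurableSpace X] (μ : Measure X) {n : ℕ}
    (t : X → Fin n → ℝ) (k : X → ℝ) (θ : Fin n → ℝ) (x : X) : ℝ :=
  Real.exp ((∑ i, θ i * t x i) - expFamF μ t k θ + k x)

/-- Expectation of `exp (k x)` under the exponential family density `p_θ`. -/
noncomputable def expFamE {X : Type*} [MeasurableSpace X] (μ : Measure X) {n : ℕ}
    (t : X → Fin n → ℝ) (k : X → ℝ) (θ : Fin n → ℝ) : ℝ :=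
  ∫ x, expFamPdf μ t k θ x * Real.exp (k x) ∂μ

/-- Jensen divergence of the cumulant function. -/
noncomputable def jensenF {X : Type*} [MeasurableSpace X] (μ : Measure X) {n : ℕ}
    (t : X → Fin n → ℝ) (k : X → ℝ) (θ θ' : Fin n → ℝ) : ℝ :=
  (expFamF μ t k θ + expFamF μ t k θ') / 2 - expFamF μ t k (((1 : ℝ) / 2) • (θ + θ'))


lemma expFamPdf_mul {X : Type*} [MeasurableSpace X] (μ : Measure X) {n : ℕ}
    (t : X → Fin n → ℝ) (k : X → ℝ) (a b : Fin n → ℝ) (x : X) :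
    expFamPdf μ t k a x * expFamPdf μ t k b x =
      Real.exp (expFamF μ t k (a + b) - expFamF μ t k a - expFamF μ t k b) *
        (expFamPdf μ t k (a + b) x * Real.exp (k x)) := by
  simp only [expFamPdf, ← Real.exp_add, Pi.add_apply, add_mul, Finset.sum_add_distrib]
  ring_nf

lemma integral_expFamPdf_mul {X : Type*} [MeasurableSpace X] (μ : Measure X) {n : ℕ}
    (t : X → Fin n → ℝ) (k : X → ℝ) (a b : Fin n → ℝ) :
    (∫ x, expFamPdf μ t k a x * expFamPdf μ t k b x ∂μ) =
      Real.exp (expFamF μ t k (a + b) - expFamF μ t k a - expFamF μ t k b) *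
        expFamE μ t k (a + b) := by
  rw [expFamE, ← integral_const_mul]
  exact integral_congr_ae (Filter.Eventually.of_forall fun x => expFamPdf_mul μ t k a b x)

/-- Closed form for the Cauchy–Schwarz divergence between two densities of an
exponential family. -/
theorem cauchySchwarzDivergence_expFam {X : Type*} [MeasurableSpace X] (μ : Measure X)
    {n : ℕ} (hn : 1 ≤ n) (t : X → Fin n → ℝ) (k : X → ℝ)
    (ht : Measurable t) (hk : Measurable k) (θ₁ θ₂ : Fin n → ℝ)
    (hZ1 : 0 < expFamZ μ t k θ₁) (hZ1' : expFamZ μ t k θ₁ < ⊤)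
    (hZ2 : 0 < expFamZ μ t k θ₂) (hZ2' : expFamZ μ t k θ₂ < ⊤)
    (hZ11 : 0 < expFamZ μ t k ((2 : ℝ) • θ₁)) (hZ11' : expFamZ μ t k ((2 : ℝ) • θ₁) < ⊤)
    (hZ22 : 0 < expFamZ μ t k ((2 : ℝ) • θ₂)) (hZ22' : expFamZ μ t k ((2 : ℝ) • θ₂) < ⊤)
    (hZ12 : 0 < expFamZ μ t k (θ₁ + θ₂)) (hZ12' : expFamZ μ t k (θ₁ + θ₂) < ⊤)
    (hE1 : 0 < expFamE μ t k ((2 : ℝ) • θ₁)) (hE2 : 0 < expFamE μ t k ((2 : ℝ) • θ₂))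
    (hE12 : 0 < expFamE μ t k (θ₁ + θ₂)) :
    -Real.log ((∫ x, expFamPdf μ t k θ₁ x * expFamPdf μ t k θ₂ x ∂μ) /
        Real.sqrt ((∫ x, (expFamPdf μ t k θ₁ x) ^ 2 ∂μ) *
          (∫ x, (expFamPdf μ t k θ₂ x) ^ 2 ∂μ)))
      = jensenF μ t k ((2 : ℝ) • θ₁) ((2 : ℝ) • θ₂) +
          Real.log (Real.sqrt (expFamE μ t k ((2 : ℝ) • θ₁) *
              expFamE μ t k ((2 : ℝ) • θ₂)) / expFamE μ t k (θ₁ + θ₂)) := by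
  have h1 : θ₁ + θ₁ = (2 : ℝ) • θ₁ := by funext i; simp [Pi.smul_apply]; ring
  have h2 : θ₂ + θ₂ = (2 : ℝ) • θ₂ := by funext i; simp [Pi.smul_apply]; ring
  have hmid : ((1 : ℝ) / 2) • ((2 : ℝ) • θ₁ + (2 : ℝ) • θ₂) = θ₁ + θ₂ := by
    funext i; simp [Pi.smul_apply]; ring
  set F1 := expFamF μ t k θ₁
  set F2 := expFamF μ t k θ₂
  set F11 := expFamF μ t k ((2 : ℝ) • θ₁)
  set F22 := expFamF μ t k ((2 : ℝ) • θ₂)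
  set F12 := expFamF μ t k (θ₁ + θ₂)
  set E1 := expFamE μ t k ((2 : ℝ) • θ₁)
  set E2 := expFamE μ t k ((2 : ℝ) • θ₂)
  set E12 := expFamE μ t k (θ₁ + θ₂)
  have hI12 : (∫ x, expFamPdf μ t k θ₁ x * expFamPdf μ t k θ₂ x ∂μ) =
      Real.exp (F12 - F1 - F2) * E12 := integral_expFamPdf_mul μ t k θ₁ θ₂
  have hI1 : (∫ x, (expFamPdf μ t k θ₁ x) ^ 2 ∂μ) = Real.exp (F11 - F1 - F1) * E1 := by
    simp only [sq]
    rw [integral_expFamPdf_mul μ t k θ₁ θ₁, h1]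
  have hI2 : (∫ x, (expFamPdf μ t k θ₂ x) ^ 2 ∂μ) = Real.exp (F22 - F2 - F2) * E2 := by
    simp only [sq]
    rw [integral_expFamPdf_mul μ t k θ₂ θ₂, h2]
  rw [hI12, hI1, hI2, jensenF, hmid]
  have hnum : (0 : ℝ) < Real.exp (F12 - F1 - F2) * E12 := by positivity
  have hden : (0 : ℝ) < (Real.exp (F11 - F1 - F1) * E1) * (Real.exp (F22 - F2 - F2) * E2) := by
    positivity
  rw [Real.log_div hnum.ne' (Real.sqrt_pos.mpr hden).ne',
    Real.log_mul (Real.exp_pos _).ne' hE12.ne', Real.log_exp,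
    Real.log_sqrt hden.le,
    Real.log_mul (by positivity) (by positivity),
    Real.log_mul (Real.exp_pos _).ne' hE1.ne',
    Real.log_mul (Real.exp_pos _).ne' hE2.ne',
    Real.log_exp, Real.log_exp,
    Real.log_div (Real.sqrt_pos.mpr (by positivity : (0:ℝ) < E1 * E2)).ne' hE12.ne',
    Real.log_sqrt (by positivity : (0:ℝ) ≤ E1 * E2),
    Real.log_mul hE1.ne' hE2.ne']
  ring
end

section
/- Let (X, F, μ) be a measure space, n ≥ 1, and let t : X → ℝ^n be measurable (carrier term k ≡ 0). For θ ∈ ℝ^n set Z(θ) := ∫ exp(⟨θ, t(x)⟩) dμ(x), F(θ) := log Z(θ), p_θ(x) := exp(⟨θ, t(x)⟩ - F(θ)). If θ ∈ ℝ^n satisfies 0 < Z(θ) < ∞ and 0 < Z(2θ) < ∞, then for every point ω ∈ X the informational energy satisfies I(p_θ) = ∫ p_θ(x)² dμ(x) = p_θ(ω)² / p_{2θ}(ω). -/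
/- Without a carrier term, `p_θ(x)² = exp(⟨2θ, t x⟩ - 2F(θ)) = p_{2θ}(x) · exp(F(2θ) - 2F(θ))`.
Integrating, `I(p_θ) = exp(F(2θ) - 2F(θ))`, and the same factorisation evaluated at any single
point `ω` recovers this constant as `p_θ(ω)² / p_{2θ}(ω)`. -/

open MeasureTheory
open scoped ENNReal

/-- Partition function of an exponential family with sufficient statistic `t` and no
carrier term. -/
noncomputable def expFamZ₀ {X : Type*} [MeasurableSpace X] (μ : Measure X) {n : ℕ}
    (t : X → Fin n → ℝ) (θ : Fin n → ℝ) : ℝ≥0∞ :=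
  ∫⁻ x, ENNReal.ofReal (Real.exp (∑ i, θ i * t x i)) ∂μ

/-- Cumulant function (log-normalizer) of the exponential family with no carrier
term. -/
noncomputable def expFamF₀ {X : Type*} [MeasurableSpace X] (μ : Measure X) {n : ℕ}
    (t : X → Fin n → ℝ) (θ : Fin n → ℝ) : ℝ :=
  Real.log (expFamZ₀ μ t θ).toReal

/-- Density of the exponential family with no carrier term. -/
noncomputable def expFamPdf₀ {X : Type*} [MeasurableSpace X] (μ : Measure X) {n : ℕ}
    (t : X → Fin n → ℝ) (θ : Fin n → ℝ) (x : X) : ℝ :=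
  Real.exp ((∑ i, θ i * t x i) - expFamF₀ μ t θ)

/-- Jensen divergence of the cumulant function. -/
noncomputable def jensenF₀ {X : Type*} [MeasurableSpace X] (μ : Measure X) {n : ℕ}
    (t : X → Fin n → ℝ) (θ θ' : Fin n → ℝ) : ℝ :=
  (expFamF₀ μ t θ + expFamF₀ μ t θ') / 2 - expFamF₀ μ t (((1 : ℝ) / 2) • (θ + θ'))

section ExpFam

variable {X : Type*} [MeasurableSpace X] (μ : Measure X) {n : ℕ} (t : X → Fin n → ℝ)

lemma integral_exp_eq_toReal_expFamZ₀ (ht : Measurable t) (θ : Fin n → ℝ) :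
    ∫ x, Real.exp (∑ i, θ i * t x i) ∂μ = (expFamZ₀ μ t θ).toReal := by
  have hmeas : Measurable fun x => ∑ i, θ i * t x i :=
    Finset.measurable_sum _ fun i _ => measurable_const.mul ((measurable_pi_apply i).comp ht)
  exact integral_eq_lintegral_of_nonneg_ae (.of_forall fun _ => (Real.exp_pos _).le)
    hmeas.exp.aestronglyMeasurable

lemma exp_expFamF₀ {θ : Fin n → ℝ} (hZ : 0 < expFamZ₀ μ t θ) (hZ' : expFamZ₀ μ t θ < ⊤) :
    Real.exp (expFamF₀ μ t θ) = (expFamZ₀ μ t θ).toReal :=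
  Real.exp_log (ENNReal.toReal_pos hZ.ne' hZ'.ne)

lemma expFamPdf₀_sq (θ : Fin n → ℝ) (x : X) :
    expFamPdf₀ μ t θ x ^ 2
      = Real.exp (∑ i, ((2 : ℝ) • θ) i * t x i) * Real.exp (-(2 * expFamF₀ μ t θ)) := by
  rw [expFamPdf₀, ← Real.exp_nat_mul, ← Real.exp_add,
    show ∑ i, ((2 : ℝ) • θ) i * t x i = 2 * ∑ i, θ i * t x i from smul_dotProduct 2 θ (t x)]
  push_cast
  ring_nf

lemma expFamPdf₀_sq_div_expFamPdf₀_two_smul (θ : Fin n → ℝ) (x : X) :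
    expFamPdf₀ μ t θ x ^ 2 / expFamPdf₀ μ t ((2 : ℝ) • θ) x
      = Real.exp (expFamF₀ μ t ((2 : ℝ) • θ) - 2 * expFamF₀ μ t θ) := by
  rw [expFamPdf₀_sq, expFamPdf₀, ← Real.exp_add, ← Real.exp_sub]
  ring_nf

lemma integral_expFamPdf₀_sq (ht : Measurable t) {θ : Fin n → ℝ}
    (hZ2 : 0 < expFamZ₀ μ t ((2 : ℝ) • θ)) (hZ2' : expFamZ₀ μ t ((2 : ℝ) • θ) < ⊤) :
    ∫ x, expFamPdf₀ μ t θ x ^ 2 ∂μ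
      = Real.exp (expFamF₀ μ t ((2 : ℝ) • θ) - 2 * expFamF₀ μ t θ) := by
  simp_rw [expFamPdf₀_sq]
  rw [integral_mul_const, integral_exp_eq_toReal_expFamZ₀ μ t ht,
    ← exp_expFamF₀ μ t hZ2 hZ2', ← Real.exp_add, sub_eq_add_neg]

end ExpFam

theorem informationalEnergy_expFam_noCarrier_pointwise_general {X : Type*}
    [MeasurableSpace X] (μ : Measure X) {n : ℕ}
    (t : X → Fin n → ℝ) (ht : Measurable t) (θ : Fin n → ℝ)
    (hZ2 : 0 < expFamZ₀ μ t ((2 : ℝ) • θ)) (hZ2' : expFamZ₀ μ t ((2 : ℝ) • θ) < ⊤) :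
    ∀ ω : X, ∫ x, (expFamPdf₀ μ t θ x) ^ 2 ∂μ
      = (expFamPdf₀ μ t θ ω) ^ 2 / expFamPdf₀ μ t ((2 : ℝ) • θ) ω := by
  intro ω
  rw [integral_expFamPdf₀_sq μ t ht hZ2 hZ2', expFamPdf₀_sq_div_expFamPdf₀_two_smul]

/-- With no carrier term, the informational energy of `p_θ` equals
`p_θ(ω)² / p_{2θ}(ω)` for every point `ω` of the sample space. -/
theorem informationalEnergy_expFam_noCarrier_pointwise {X : Type*}
    [MeasurableSpace X] (μ : Measure X) {n : ℕ} (hn : 1 ≤ n)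
    (t : X → Fin n → ℝ) (ht : Measurable t) (θ : Fin n → ℝ)
    (hZ : 0 < expFamZ₀ μ t θ) (hZ' : expFamZ₀ μ t θ < ⊤)
    (hZ2 : 0 < expFamZ₀ μ t ((2 : ℝ) • θ)) (hZ2' : expFamZ₀ μ t ((2 : ℝ) • θ) < ⊤) :
    ∀ ω : X, ∫ x, (expFamPdf₀ μ t θ x) ^ 2 ∂μ
      = (expFamPdf₀ μ t θ ω) ^ 2 / expFamPdf₀ μ t ((2 : ℝ) • θ) ω :=
  informationalEnergy_expFam_noCarrier_pointwise_general μ t ht θ hZ2 hZ2'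
end
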